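/- The power of the approximate classifier two-sample test equals Φ((ε√n − √(1/4 − δ²) Φ^{-1}(1 − α)) / √(1/4 − δ² − 2δε − ε²)), where Φ is the standard normal CDF, assuming the test statistic Acc has null distribution N(1/2 + δ, (1/4 − δ²)/n) and alternative distribution N(1/2 + δ + ε, (1/4 − δ² − 2δε − ε²)/n). -/

import Mathlib

open MeasureTheory ProbabilityTheory

lemma gaussian_ici (a : ℝ) :
    (gaussianReal 0 1) (Set.Ici a) = (gaussianReal 0 1) (Set.Iic (-a)) := by
  have hmap : (gaussianReal 0 1).map ((-1 : ℝ) * ·) = gaussianReal 0 1 := by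
    rw [ProbabilityTheory.gaussianReal_map_const_mul (-1)]
    norm_num
  have hmeas : Measurable (fun x : ℝ => (-1 : ℝ) * x) := by fun_prop
  calc (gaussianReal 0 1) (Set.Ici a)
      = ((gaussianReal 0 1).map ((-1 : ℝ) * ·)) (Set.Ici a) := by rw [hmap]
    _ = (gaussianReal 0 1) (((-1 : ℝ) * ·) ⁻¹' (Set.Ici a)) :=
        Measure.map_apply hmeas measurableSet_Ici
    _ = (gaussianReal 0 1) (Set.Iic (-a)) := by
        congr 1
        ext x
        simp [Set.mem_preimage]

/-- The power of the approximate classifier two-sample test: if the test statistic `Acc`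
has alternative distribution `N(1/2 + δ + ε, (1/4 − δ² − 2δε − ε²)/n)` and the test
rejects when `Acc ≥ z_α = 1/2 + δ + √((1/4 − δ²)/n) Φ⁻¹(1 − α)`, then the power equals
`Φ((ε√n − √(1/4 − δ²) Φ⁻¹(1 − α)) / √(1/4 − δ² − 2δε − ε²))`. Here `Φ` is the standard
normal CDF and `q = Φ⁻¹(1 − α)` is encoded by the hypothesis `Φ q = 1 − α`. -/
theorem approx_c2st_power
    (n : ℕ) (hn : 0 < n) (δ ε α q : ℝ)
    (hδ : δ ∈ Set.Ioo (0 : ℝ) (1 / 2)) (hε : ε ∈ Set.Ioo 0 (1 / 2 - δ))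
    (hα : α ∈ Set.Ioo (0 : ℝ) 1)
    (hq : cdf (gaussianReal 0 1) q = 1 - α) :
    ((gaussianReal (1 / 2 + δ + ε)
        ((1 / 4 - δ ^ 2 - 2 * δ * ε - ε ^ 2) / n).toNNReal)
      {x | 1 / 2 + δ + Real.sqrt ((1 / 4 - δ ^ 2) / n) * q ≤ x}).toReal =
      cdf (gaussianReal 0 1)
        ((ε * Real.sqrt n - Real.sqrt (1 / 4 - δ ^ 2) * q) /
          Real.sqrt (1 / 4 - δ ^ 2 - 2 * δ * ε - ε ^ 2)) := by
  obtain ⟨hδ0, hδ1⟩ := hδ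
  obtain ⟨hε0, hε1⟩ := hε
  have hnpos : (0 : ℝ) < n := Nat.cast_pos.mpr hn
  have hc : (0 : ℝ) < 1 / 4 - δ ^ 2 - 2 * δ * ε - ε ^ 2 := by nlinarith
  set c : ℝ := 1 / 4 - δ ^ 2 - 2 * δ * ε - ε ^ 2 with hcdef
  have hv0 : (0 : ℝ) < c / n := div_pos hc hnpos
  set σ : ℝ := Real.sqrt (c / n) with hσdef
  have hσ : 0 < σ := Real.sqrt_pos.mpr hv0
  set m : ℝ := 1 / 2 + δ + ε with hmdef
  set t : ℝ := 1 / 2 + δ + Real.sqrt ((1 / 4 - δ ^ 2) / n) * q with htdef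
  -- the gaussian with mean m and variance c/n is the pushforward of std gaussian
  have h1 : (gaussianReal 0 1).map (fun x => σ * x + m)
      = gaussianReal m ((c / n).toNNReal) := by
    have e1 : (gaussianReal 0 1).map (σ * ·)
        = gaussianReal 0 ((c / n).toNNReal) := by
      rw [ProbabilityTheory.gaussianReal_map_const_mul σ, mul_zero]
      congr 1
      apply NNReal.coe_injective
      push_cast
      rw [Real.sq_sqrt hv0.le, Real.coe_toNNReal _ hv0.le, mul_one]
    have e2 : ((gaussianReal 0 1).map (σ * ·)).map (· + m)
        = gaussianReal m ((c / n).toNNReal) := by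
      rw [e1, ProbabilityTheory.gaussianReal_map_add_const m, zero_add]
    rw [← e2, Measure.map_map (by fun_prop) (by fun_prop)]
    rfl
  have hmeas : Measurable (fun x : ℝ => σ * x + m) := by fun_prop
  have hset : {x : ℝ | t ≤ x} = Set.Ici t := rfl
  have h2 : (gaussianReal m ((c / n).toNNReal)) {x | t ≤ x}
      = (gaussianReal 0 1) (Set.Ici ((t - m) / σ)) := by
    rw [← h1, hset, Measure.map_apply hmeas measurableSet_Ici]
    congr 1
    ext x
    simp only [Set.mem_preimage, Set.mem_Ici]
    rw [div_le_iff₀ hσ]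
    constructor <;> intro h <;> nlinarith
  have hnpos' : (0:ℝ) < n := hnpos
  have hsqn : Real.sqrt n > 0 := Real.sqrt_pos.mpr hnpos
  have hsc : Real.sqrt c > 0 := Real.sqrt_pos.mpr hc
  have hd : (0 : ℝ) ≤ 1 / 4 - δ ^ 2 := by nlinarith
  have e3 : Real.sqrt ((1 / 4 - δ ^ 2) / n)
      = Real.sqrt (1 / 4 - δ ^ 2) / Real.sqrt n := Real.sqrt_div hd n
  have e4 : σ = Real.sqrt c / Real.sqrt n := Real.sqrt_div hc.le n
  have key : -((t - m) / σ)
      = (ε * Real.sqrt n - Real.sqrt (1 / 4 - δ ^ 2) * q) / Real.sqrt c := by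
    rw [htdef, hmdef, e3, e4]
    field_simp
    ring
  rw [h2, gaussian_ici, key, ProbabilityTheory.cdf_eq_real, measureReal_def]
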